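/- Suppose 0 < b < 1, 0 < e < 1, r ∈ [0,1], p, q ≥ 0 with p + q ≤ 1, and δ > 0. Then for every (x,y) ∈ [0,1]² the color-swap symmetry holds: F_{1−r, p, q, e, b, δ}(1−x, 1−y) = (1 − F¹_{r,p,q,b,e,δ}(x,y), 1 − F²_{r,p,q,b,e,δ}(x,y)), where F¹ and F² denote the two components of the map F and the subscripts indicate the parameters with which F is computed. -/

import Mathlib

noncomputable def sVal (p q δ : ℝ) : ℝ := (p + q) * δ

noncomputable def aR (r p q δ t : ℝ) : ℝ := t + r * sVal p q δ

noncomputable def aB (r p q δ t : ℝ) : ℝ := 1 - t + (1 - r) * sVal p q δ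

noncomputable def P1RR (r p q b e δ x : ℝ) : ℝ :=
  e * aR r p q δ x / (1 + sVal p q δ - b * aB r p q δ x - (1 - e) * aR r p q δ x)

noncomputable def P1RB (r p q b e δ x : ℝ) : ℝ :=
  (1 - b) * aB r p q δ x / (1 + sVal p q δ - b * aB r p q δ x - (1 - e) * aR r p q δ x)

noncomputable def P1BR (r p q b e δ x : ℝ) : ℝ :=
  (1 - e) * aR r p q δ x / (1 + sVal p q δ - e * aR r p q δ x - (1 - b) * aB r p q δ x)

noncomputable def P1BB (r p q b e δ x : ℝ) : ℝ :=
  b * aB r p q δ x / (1 + sVal p q δ - e * aR r p q δ x - (1 - b) * aB r p q δ x)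

noncomputable def P2RR (r p q b e δ y : ℝ) : ℝ :=
  e * aR r p q δ y / (1 + sVal p q δ - e * aB r p q δ y - (1 - e) * aR r p q δ y)

noncomputable def P2RB (r p q b e δ y : ℝ) : ℝ :=
  (1 - e) * aB r p q δ y / (1 + sVal p q δ - e * aB r p q δ y - (1 - e) * aR r p q δ y)

noncomputable def P2BR (r p q b e δ y : ℝ) : ℝ :=
  (1 - b) * aR r p q δ y / (1 + sVal p q δ - b * aR r p q δ y - (1 - b) * aB r p q δ y)

noncomputable def P2BB (r p q b e δ y : ℝ) : ℝ :=
  b * aB r p q δ y / (1 + sVal p q δ - b * aR r p q δ y - (1 - b) * aB r p q δ y)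

noncomputable def D3 (r p q b e δ x y : ℝ) : ℝ :=
  (1 + sVal p q δ) ^ 2 - b * aR r p q δ y * aB r p q δ x - e * aR r p q δ x * aB r p q δ y
    - (1 - b) * aB r p q δ x * aB r p q δ y - (1 - e) * aR r p q δ x * aR r p q δ y

noncomputable def P3RR (r p q b e δ x y : ℝ) : ℝ :=
  e * aR r p q δ y * aR r p q δ x / D3 r p q b e δ x y

noncomputable def P3BR (r p q b e δ x y : ℝ) : ℝ :=
  (1 - e) * aB r p q δ y * aR r p q δ x / D3 r p q b e δ x y

noncomputable def P3RB (r p q b e δ x y : ℝ) : ℝ :=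
  (1 - b) * aR r p q δ y * aB r p q δ x / D3 r p q b e δ x y

noncomputable def P3BB (r p q b e δ x y : ℝ) : ℝ :=
  b * aB r p q δ y * aB r p q δ x / D3 r p q b e δ x y

noncomputable def F (r p q b e δ : ℝ) (θ : ℝ × ℝ) : ℝ × ℝ :=
  (p * (r * P1RR r p q b e δ θ.1 + (1 - r) * P1BR r p q b e δ θ.1) + q * r
      + (1 - p - q) * (P3RR r p q b e δ θ.1 θ.2 + P3BR r p q b e δ θ.1 θ.2),
   p * r + q * (r * P2RR r p q b e δ θ.2 + (1 - r) * P2BR r p q b e δ θ.2)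
      + (1 - p - q) * (P3RR r p q b e δ θ.1 θ.2 + P3RB r p q b e δ θ.1 θ.2))

noncomputable def Ci (r p q b e δ x y : ℝ) : ℝ :=
  p * r * e / (1 + sVal p q δ - b * aB r p q δ x - (1 - e) * aR r p q δ x)
    + p * (1 - r) * (1 - e) / (1 + sVal p q δ - e * aR r p q δ x - (1 - b) * aB r p q δ x)
    + (1 - p - q) * (e * aR r p q δ y + (1 - e) * aB r p q δ y) / D3 r p q b e δ x y

noncomputable def Co (r p q b e δ x y : ℝ) : ℝ :=
  q * r * e / (1 + sVal p q δ - e * aB r p q δ y - (1 - e) * aR r p q δ y)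
    + q * (1 - r) * (1 - b) / (1 + sVal p q δ - b * aR r p q δ y - (1 - b) * aB r p q δ y)
    + (1 - p - q) * (e * aR r p q δ x + (1 - b) * aB r p q δ x) / D3 r p q b e δ x y

noncomputable def CiB (r p q b e δ x y : ℝ) : ℝ := Ci (1 - r) p q e b δ (1 - x) (1 - y)

noncomputable def CoB (r p q b e δ x y : ℝ) : ℝ := Co (1 - r) p q e b δ (1 - x) (1 - y)

/-!
Swapping the colors maps `aR` to `aB` and back, so it sends each red attachment probability
of `F (1 - r) p q e b δ` at `(1 - x, 1 - y)` to the corresponding blue one of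
`F r p q b e δ` at `(x, y)`, and leaves `D3` unchanged. The theorem then says that red and
blue probabilities of each growth event add up to one. This holds because every denominator
is the sum of its numerators (using `aR t + aB t = 1 + s`), and every denominator is a
combination of `aR t, aB t ≥ 0` with positive weights, hence nonzero.
-/

open Set

lemma mul_add_mul_pos_of_add_pos {α β u v : ℝ} (hα : 0 < α) (hβ : 0 < β) (hu : 0 ≤ u)
    (hv : 0 ≤ v) (huv : 0 < u + v) : 0 < α * u + β * v := by
  nlinarith [mul_pos (lt_min hα hβ) huv, mul_le_mul_of_nonneg_right (min_le_left α β) hu,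
    mul_le_mul_of_nonneg_right (min_le_right α β) hv]

section Swap

variable (r p q b e δ : ℝ)

lemma aR_swap (t : ℝ) : aR (1 - r) p q δ (1 - t) = aB r p q δ t := by
  unfold aR aB; ring

lemma aB_swap (t : ℝ) : aB (1 - r) p q δ (1 - t) = aR r p q δ t := by
  unfold aR aB; ring

lemma P1RR_swap (x : ℝ) : P1RR (1 - r) p q e b δ (1 - x) = P1BB r p q b e δ x := by
  unfold P1RR P1BB; rw [aR_swap, aB_swap]

lemma P1BR_swap (x : ℝ) : P1BR (1 - r) p q e b δ (1 - x) = P1RB r p q b e δ x := by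
  unfold P1BR P1RB; rw [aR_swap, aB_swap]

lemma P2RR_swap (y : ℝ) : P2RR (1 - r) p q e b δ (1 - y) = P2BB r p q b e δ y := by
  unfold P2RR P2BB; rw [aR_swap, aB_swap]

lemma P2BR_swap (y : ℝ) : P2BR (1 - r) p q e b δ (1 - y) = P2RB r p q b e δ y := by
  unfold P2BR P2RB; rw [aR_swap, aB_swap]

lemma D3_swap (x y : ℝ) : D3 (1 - r) p q e b δ (1 - x) (1 - y) = D3 r p q b e δ x y := by
  unfold D3; rw [aR_swap, aR_swap, aB_swap, aB_swap]; ring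

lemma P3RR_swap (x y : ℝ) :
    P3RR (1 - r) p q e b δ (1 - x) (1 - y) = P3BB r p q b e δ x y := by
  unfold P3RR P3BB; rw [aR_swap, aR_swap, D3_swap]

lemma P3BR_swap (x y : ℝ) :
    P3BR (1 - r) p q e b δ (1 - x) (1 - y) = P3RB r p q b e δ x y := by
  unfold P3BR P3RB; rw [aR_swap, aB_swap, D3_swap]

lemma P3RB_swap (x y : ℝ) :
    P3RB (1 - r) p q e b δ (1 - x) (1 - y) = P3BR r p q b e δ x y := by
  unfold P3RB P3BR; rw [aR_swap, aB_swap, D3_swap]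

end Swap

section SumToOne

variable {r p q b e δ : ℝ}

lemma aR_add_aB (t : ℝ) : aR r p q δ t + aB r p q δ t = 1 + sVal p q δ := by
  unfold aR aB; ring

lemma mul_aR_add_mul_aB_pos {α β t : ℝ} (hα : 0 < α) (hβ : 0 < β) (hr : r ∈ Icc 0 1)
    (hs : 0 ≤ sVal p q δ) (ht : t ∈ Icc 0 1) : 0 < α * aR r p q δ t + β * aB r p q δ t := by
  obtain ⟨hr0, hr1⟩ := hr
  obtain ⟨ht0, ht1⟩ := ht
  refine mul_add_mul_pos_of_add_pos hα hβ ?_ ?_ ?_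
  · unfold aR; positivity
  · unfold aB; nlinarith
  · rw [aR_add_aB]; linarith

lemma P1RR_add_P1RB (x : ℝ) (h : e * aR r p q δ x + (1 - b) * aB r p q δ x ≠ 0) :
    P1RR r p q b e δ x + P1RB r p q b e δ x = 1 := by
  have hden : 1 + sVal p q δ - b * aB r p q δ x - (1 - e) * aR r p q δ x
      = e * aR r p q δ x + (1 - b) * aB r p q δ x := by
    rw [← aR_add_aB (r := r) x]; ring
  unfold P1RR P1RB
  rw [← add_div, hden, div_self h]

lemma P1BR_add_P1BB (x : ℝ) (h : (1 - e) * aR r p q δ x + b * aB r p q δ x ≠ 0) :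
    P1BR r p q b e δ x + P1BB r p q b e δ x = 1 := by
  have hden : 1 + sVal p q δ - e * aR r p q δ x - (1 - b) * aB r p q δ x
      = (1 - e) * aR r p q δ x + b * aB r p q δ x := by
    rw [← aR_add_aB (r := r) x]; ring
  unfold P1BR P1BB
  rw [← add_div, hden, div_self h]

lemma P2RR_add_P2RB (y : ℝ) (h : e * aR r p q δ y + (1 - e) * aB r p q δ y ≠ 0) :
    P2RR r p q b e δ y + P2RB r p q b e δ y = 1 := by
  have hden : 1 + sVal p q δ - e * aB r p q δ y - (1 - e) * aR r p q δ y
      = e * aR r p q δ y + (1 - e) * aB r p q δ y := by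
    rw [← aR_add_aB (r := r) y]; ring
  unfold P2RR P2RB
  rw [← add_div, hden, div_self h]

lemma P2BR_add_P2BB (y : ℝ) (h : (1 - b) * aR r p q δ y + b * aB r p q δ y ≠ 0) :
    P2BR r p q b e δ y + P2BB r p q b e δ y = 1 := by
  have hden : 1 + sVal p q δ - b * aR r p q δ y - (1 - b) * aB r p q δ y
      = (1 - b) * aR r p q δ y + b * aB r p q δ y := by
    rw [← aR_add_aB (r := r) y]; ring
  unfold P2BR P2BB
  rw [← add_div, hden, div_self h]

lemma D3_eq (x y : ℝ) : D3 r p q b e δ x y =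
    (e * aR r p q δ y + (1 - e) * aB r p q δ y) * aR r p q δ x
      + ((1 - b) * aR r p q δ y + b * aB r p q δ y) * aB r p q δ x := by
  unfold D3
  rw [sq]; nth_rw 1 [← aR_add_aB (r := r) x]; rw [← aR_add_aB (r := r) y]; ring

lemma D3_pos (he : e ∈ Ioo 0 1) (hb : b ∈ Ioo 0 1) (hr : r ∈ Icc 0 1) (hs : 0 ≤ sVal p q δ)
    {x y : ℝ} (hx : x ∈ Icc 0 1) (hy : y ∈ Icc 0 1) : 0 < D3 r p q b e δ x y := by
  have he' : 0 < 1 - e := sub_pos.2 he.2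
  have hb' : 0 < 1 - b := sub_pos.2 hb.2
  rw [D3_eq]
  exact mul_aR_add_mul_aB_pos (mul_aR_add_mul_aB_pos he.1 he' hr hs hy)
    (mul_aR_add_mul_aB_pos hb' hb.1 hr hs hy) hr hs hx

lemma P3_sum_eq_one (x y : ℝ) (h : D3 r p q b e δ x y ≠ 0) :
    P3RR r p q b e δ x y + P3BR r p q b e δ x y + P3RB r p q b e δ x y
      + P3BB r p q b e δ x y = 1 := by
  unfold P3RR P3BR P3RB P3BB
  rw [← add_div, ← add_div, ← add_div, div_eq_one_iff_eq h, D3_eq]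
  ring

end SumToOne

theorem F_color_swap_general (r p q b e δ : ℝ)
    (hb0 : 0 < b) (hb1 : b < 1) (he0 : 0 < e) (he1 : e < 1)
    (hr0 : 0 ≤ r) (hr1 : r ≤ 1) (hp : 0 ≤ p) (hq : 0 ≤ q)
    (hδ : 0 < δ) :
    ∀ x ∈ Set.Icc (0 : ℝ) 1, ∀ y ∈ Set.Icc (0 : ℝ) 1,
      F (1 - r) p q e b δ (1 - x, 1 - y) =
        (1 - (F r p q b e δ (x, y)).1, 1 - (F r p q b e δ (x, y)).2) := by
  intro x hx y hy
  have hr : r ∈ Icc 0 1 := ⟨hr0, hr1⟩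
  have hs : 0 ≤ sVal p q δ := mul_nonneg (add_nonneg hp hq) hδ.le
  have he' : 0 < 1 - e := sub_pos.2 he1
  have hb' : 0 < 1 - b := sub_pos.2 hb1
  have hP3 := P3_sum_eq_one x y (D3_pos ⟨he0, he1⟩ ⟨hb0, hb1⟩ hr hs hx hy).ne'
  simp only [F, Prod.mk.injEq, P1RR_swap, P1BR_swap, P2RR_swap, P2BR_swap, P3RR_swap,
    P3BR_swap, P3RB_swap]
  constructor
  · linear_combination
      (p * r) * P1RR_add_P1RB x (mul_aR_add_mul_aB_pos he0 hb' hr hs hx).ne'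
        + (p * (1 - r)) * P1BR_add_P1BB x (mul_aR_add_mul_aB_pos he' hb0 hr hs hx).ne'
        + (1 - p - q) * hP3
  · linear_combination
      (q * r) * P2RR_add_P2RB y (mul_aR_add_mul_aB_pos he0 he' hr hs hy).ne'
        + (q * (1 - r)) * P2BR_add_P2BB y (mul_aR_add_mul_aB_pos hb' hb0 hr hs hy).ne'
        + (1 - p - q) * hP3

/-- Color-swap symmetry of the DMPA mean-field map: relabeling the two colors
(swapping `r` with `1 - r` and the homophily parameters `b` and `e`) exchanges the
roles of the two groups. -/
theorem F_color_swap (r p q b e δ : ℝ)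
    (hb0 : 0 < b) (hb1 : b < 1) (he0 : 0 < e) (he1 : e < 1)
    (hr0 : 0 ≤ r) (hr1 : r ≤ 1) (hp : 0 ≤ p) (hq : 0 ≤ q) (hpq : p + q ≤ 1)
    (hδ : 0 < δ) :
    ∀ x ∈ Set.Icc (0 : ℝ) 1, ∀ y ∈ Set.Icc (0 : ℝ) 1,
      F (1 - r) p q e b δ (1 - x, 1 - y) =
        (1 - (F r p q b e δ (x, y)).1, 1 - (F r p q b e δ (x, y)).2) :=
  F_color_swap_general r p q b e δ hb0 hb1 he0 he1 hr0 hr1 hp hq hδ
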